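/- arXiv:1811.01077 — 2 statements merged into one kernel-verified Lean document; each statement's English description precedes it below -/
import Mathlib

section
/- For every positive integer b, the limit as T → ∞ (over positive integers T ≥ b) of E[min(b, Bin(T, b/T))] / b exists and equals 1 − (b^b / b!)·e^{−b}. -/
/-!
Write `E[min(b, X)] = b - E[(b - X)⁺]`; the positive part only sees the finitely many
values `X = l < b`. By the Poisson limit theorem each binomial weight `P(Bin(T, b/T) = l)`
tends to `e^{-b} b^l / l!`, and the resulting finite sum telescopes:
`∑_{l<b} b^l/l! (b - l) = b · b^b / b!`.
-/

/-- `E[min(c, Bin(T, ρ))]`: the expectation of a Binomial(T, ρ) random variable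
truncated at `c`. -/
noncomputable def truncBinExp (T : ℕ) (ρ c : ℝ) : ℝ :=
  ∑ l ∈ Finset.range (T + 1), (T.choose l : ℝ) * ρ ^ l * (1 - ρ) ^ (T - l) * min c (l : ℝ)

open Filter Finset Topology ProbabilityTheory

theorem truncBinExp_eq_sub_sum (T c : ℕ) (ρ : ℝ) (hc : c ≤ T + 1) :
    truncBinExp T ρ c =
      c - ∑ l ∈ range c, (T.choose l : ℝ) * ρ ^ l * (1 - ρ) ^ (T - l) * (c - l) := by
  have hmass : ∑ l ∈ range (T + 1), (T.choose l : ℝ) * ρ ^ l * (1 - ρ) ^ (T - l) = 1 := by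
    have h := add_pow ρ (1 - ρ) T
    rw [add_sub_cancel, one_pow] at h
    exact (sum_congr rfl fun l _ => by ring).trans h.symm
  have htail : ∑ l ∈ range (T + 1),
      (T.choose l : ℝ) * ρ ^ l * (1 - ρ) ^ (T - l) * (c - min (c : ℝ) l) =
      ∑ l ∈ range c, (T.choose l : ℝ) * ρ ^ l * (1 - ρ) ^ (T - l) * (c - l) := by
    refine (sum_subset (range_subset_range.2 hc) fun l _ hl => ?_).symm.trans
      (sum_congr rfl fun l hl => ?_)
    · have : (c : ℝ) ≤ l := by exact_mod_cast not_lt.1 (mem_range.not.1 hl)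
      rw [min_eq_left this, sub_self, mul_zero]
    · have : (l : ℝ) ≤ c := by exact_mod_cast (mem_range.1 hl).le
      rw [min_eq_right this]
  simp_rw [← htail, mul_sub, sum_sub_distrib, ← sum_mul, hmass, one_mul, sub_sub_cancel]
  rfl

theorem tendsto_truncBinExp_of_tendsto_mul {p : ℕ → ℝ} {r : ℝ} (c : ℕ)
    (hr : Tendsto (fun n => n * p n) atTop (𝓝 r)) :
    Tendsto (fun T => truncBinExp T (p T) c) atTop
      (𝓝 (c - ∑ l ∈ range c, Real.exp (-r) * r ^ l / l.factorial * (c - l))) := by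
  refine (tendsto_const_nhds.sub (tendsto_finsetSum _ fun l _ =>
    (tendsto_choose_mul_pow_of_tendsto_mul_atTop l hr).mul_const _)).congr' ?_
  filter_upwards [eventually_ge_atTop c] with T hT
  exact (truncBinExp_eq_sub_sum T c (p T) (by omega)).symm

theorem sum_range_pow_div_factorial_mul_sub (x : ℝ) (n : ℕ) :
    ∑ l ∈ range n, x ^ l / l.factorial * (x - l) = n * x ^ n / n.factorial := by
  induction n with
  | zero => simp
  | succ n ih =>
    rw [sum_range_succ, ih, Nat.factorial_succ]
    push_cast
    field_simp
    ring

/-- For every positive integer `b`, as `T → ∞`,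
`E[min(b, Bin(T, b/T))] / b → 1 − (b^b / b!)·e^{−b}`. -/
theorem stmt_8 (b : ℕ) (hb : 0 < b) :
    Filter.Tendsto (fun T : ℕ => truncBinExp T ((b : ℝ) / T) b / b) Filter.atTop
      (nhds (1 - (b : ℝ) ^ b / (Nat.factorial b) * Real.exp (-(b : ℝ)))) := by
  have hb0 : (b : ℝ) ≠ 0 := by exact_mod_cast hb.ne'
  have hmean : Tendsto (fun T : ℕ => T * ((b : ℝ) / T)) atTop (𝓝 b) :=
    tendsto_const_nhds.congr' <| by
      filter_upwards [eventually_ne_atTop 0] with T hT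
      field_simp
  have hlim := (tendsto_truncBinExp_of_tendsto_mul b hmean).div_const (b : ℝ)
  convert hlim using 2
  have hsum : ∑ l ∈ range b, Real.exp (-b) * (b : ℝ) ^ l / l.factorial * (b - l) =
      Real.exp (-b) * (b * (b : ℝ) ^ b / b.factorial) := by
    rw [← sum_range_pow_div_factorial_mul_sub, mul_sum]
    exact sum_congr rfl fun l _ => by ring
  rw [hsum]
  field_simp
end

section
/- Fix a real b ≥ 0 and a positive integer T. Let Q_1, …, Q_T be independent random variables taking values in [0,1] and let p_1, …, p_T ≥ 0 be per-period prices. Let σ be any permutation of {1, …, T} such that p_{σ(1)} ≥ p_{σ(2)} ≥ … ≥ p_{σ(T)}. Then E[Rev((p_{σ(t)})_{t=1}^T, (Q_{σ(t)})_{t=1}^T; b)] ≥ E[Rev(p, Q; b)]; that is, permuting the price–demand pairs so that prices are non-increasing over time does not decrease the expected revenue. -/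
open MeasureTheory ProbabilityTheory

/-- Single-item revenue with inventory truncation: with initial inventory `b`, per-period prices
`P 0, …, P (T-1)` and demands `Q 0, …, Q (T-1)` (periods indexed from `0`), the revenue is
`Σ_t P t · (min b S_{t+1} − min b S_t)` where `S_t = Q 0 + ⋯ + Q (t-1)`. -/
noncomputable def singleItemRev (b : ℝ) (T : ℕ) (P Q : ℕ → ℝ) : ℝ :=
  ∑ t ∈ Finset.range T,
    P t * (min b (∑ s ∈ Finset.range (t + 1), Q s) - min b (∑ s ∈ Finset.range t, Q s))

/-!
The inequality already holds for every realisation of the demands. Sort the prices into levels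
`c 0 ≥ ⋯ ≥ c (T - 1) ≥ c T = 0`. Summation by parts writes any revenue as the sum over `k` of
`c k - c (k + 1)` times the quantity sold in the periods carrying the `k + 1` highest prices.
When those periods come first they sell `min b (their total demand)`, which bounds what they can
sell in any other order.
-/

open Finset

noncomputable def soldQty (b : ℝ) (q : ℕ → ℝ) (t : ℕ) : ℝ :=
  min b (∑ s ∈ range (t + 1), q s) - min b (∑ s ∈ range t, q s)

lemma singleItemRev_eq_sum_mul_soldQty (b : ℝ) (T : ℕ) (P q : ℕ → ℝ) :
    singleItemRev b T P q = ∑ t ∈ range T, P t * soldQty b q t := rfl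

section SoldQty

variable {b : ℝ} {q : ℕ → ℝ}

lemma sum_range_soldQty (hb : 0 ≤ b) (n : ℕ) :
    ∑ t ∈ range n, soldQty b q t = min b (∑ s ∈ range n, q s) := by
  simp only [soldQty]
  rw [sum_range_sub (fun t => min b (∑ s ∈ range t, q s))]
  simp [hb]

lemma soldQty_nonneg {t : ℕ} (hq : 0 ≤ q t) : 0 ≤ soldQty b q t :=
  sub_nonneg.2 <| min_le_min_left b <| by rw [sum_range_succ]; linarith

lemma soldQty_le {t : ℕ} (hq : 0 ≤ q t) : soldQty b q t ≤ q t := by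
  have : min b (∑ s ∈ range t, q s + q t) ≤ min b (∑ s ∈ range t, q s) + q t :=
    calc min b (∑ s ∈ range t, q s + q t) ≤ min (b + q t) (∑ s ∈ range t, q s + q t) :=
          min_le_min_right _ (le_add_of_nonneg_right hq)
      _ = min b (∑ s ∈ range t, q s) + q t := min_add_add_right _ _ _
  rw [soldQty, sum_range_succ]
  linarith

lemma sum_soldQty_le_min (hb : 0 ≤ b) {n : ℕ} (hq : ∀ t < n, 0 ≤ q t) {A : Finset ℕ}
    (hA : A ⊆ range n) : ∑ t ∈ A, soldQty b q t ≤ min b (∑ t ∈ A, q t) := by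
  refine le_min ?_ (sum_le_sum fun t ht => soldQty_le (hq t (mem_range.1 (hA ht))))
  calc ∑ t ∈ A, soldQty b q t ≤ ∑ t ∈ range n, soldQty b q t :=
        sum_le_sum_of_subset_of_nonneg hA fun t ht _ => soldQty_nonneg (hq t (mem_range.1 ht))
    _ = min b (∑ s ∈ range n, q s) := sum_range_soldQty hb n
    _ ≤ b := min_le_left _ _

lemma abs_soldQty_le_one {t : ℕ} (hq : q t ∈ Set.Icc (0 : ℝ) 1) : |soldQty b q t| ≤ 1 := by
  rw [abs_of_nonneg (soldQty_nonneg hq.1)]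
  exact (soldQty_le hq.1).trans hq.2

end SoldQty

/-- Summation by parts: `c (π t)` is the sum of the decrements `c k - c (k + 1)` over `k ≥ π t`. -/
lemma sum_comp_mul_eq_sum_sub_mul_sum_filter {T : ℕ} (c d : ℕ → ℝ) (hcT : c T = 0)
    {π : ℕ → ℕ} (hπ : ∀ t < T, π t < T) :
    ∑ t ∈ range T, c (π t) * d t =
      ∑ k ∈ range T, (c k - c (k + 1)) * ∑ t ∈ range T with π t ≤ k, d t := by
  have hlevel : ∀ t < T, c (π t) = ∑ k ∈ range T with π t ≤ k, (c k - c (k + 1)) := by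
    intro t ht
    have hIco : (range T).filter (π t ≤ ·) = Ico (π t) T := by
      ext k; simp only [mem_filter, mem_range, mem_Ico]; tauto
    rw [hIco, ← neg_inj, ← sum_neg_distrib]
    simp only [neg_sub]
    rw [sum_Ico_sub _ (hπ t ht).le, hcT, zero_sub]
  calc ∑ t ∈ range T, c (π t) * d t
      = ∑ t ∈ range T, ∑ k ∈ range T, if π t ≤ k then (c k - c (k + 1)) * d t else 0 := by
        refine sum_congr rfl fun t ht => ?_
        rw [hlevel t (mem_range.1 ht), sum_filter, sum_mul]
        exact sum_congr rfl fun k _ => by split_ifs <;> simp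
    _ = ∑ k ∈ range T, (c k - c (k + 1)) * ∑ t ∈ range T with π t ≤ k, d t := by
        rw [sum_comm]
        refine sum_congr rfl fun k _ => ?_
        rw [sum_filter, mul_sum]
        exact sum_congr rfl fun t _ => by split_ifs <;> simp

lemma Equiv.Perm.apply_lt_of_forall_le_apply_eq (σ : Equiv.Perm ℕ) {T : ℕ}
    (hσ : ∀ s, T ≤ s → σ s = s) : ∀ s < T, σ s < T := by
  intro s hs
  by_contra h
  have := σ.injective (hσ (σ s) (not_lt.1 h))
  omega

lemma sum_soldQty_filter_le_sum_range_soldQty_comp {b : ℝ} (hb : 0 ≤ b) {T : ℕ} {q : ℕ → ℝ}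
    (hq : ∀ s < T, 0 ≤ q s) {σ : Equiv.Perm ℕ} (hσlt : ∀ s < T, σ s < T) {k : ℕ} (hk : k < T) :
    ∑ t ∈ range T with σ.symm t ≤ k, soldQty b q t ≤
      ∑ j ∈ range (k + 1), soldQty b (fun s => q (σ s)) j := by
  have hdemand : ∑ t ∈ range T with σ.symm t ≤ k, q t = ∑ j ∈ range (k + 1), q (σ j) := by
    refine sum_equiv σ.symm (fun t => ?_) (fun t _ => by simp)
    simp only [mem_filter, mem_range]
    constructor
    · omega
    · intro h
      refine ⟨?_, by omega⟩
      simpa using hσlt _ (show σ.symm t < T by omega)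
  calc ∑ t ∈ range T with σ.symm t ≤ k, soldQty b q t
      ≤ min b (∑ t ∈ range T with σ.symm t ≤ k, q t) := sum_soldQty_le_min hb hq (filter_subset _ _)
    _ = ∑ j ∈ range (k + 1), soldQty b (fun s => q (σ s)) j := by
        rw [hdemand, sum_range_soldQty hb]

theorem singleItemRev_le_singleItemRev_comp_perm {b : ℝ} (hb : 0 ≤ b) {T : ℕ} {q p : ℕ → ℝ}
    (hq : ∀ s < T, 0 ≤ q s) (hp : ∀ s < T, 0 ≤ p s) {σ : Equiv.Perm ℕ}
    (hσfix : ∀ s, T ≤ s → σ s = s)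
    (hsorted : ∀ s s' : ℕ, s ≤ s' → s' < T → p (σ s') ≤ p (σ s)) :
    singleItemRev b T p q ≤ singleItemRev b T (fun s => p (σ s)) (fun s => q (σ s)) := by
  have hσlt := σ.apply_lt_of_forall_le_apply_eq hσfix
  have hσsymmlt := Equiv.Perm.apply_lt_of_forall_le_apply_eq σ.symm fun s hs =>
    σ.symm_apply_eq.2 (hσfix s hs).symm
  set c : ℕ → ℝ := fun k => if k < T then p (σ k) else 0 with hc
  have hdecr : ∀ k < T, 0 ≤ c k - c (k + 1) := by
    intro k hk
    by_cases hk1 : k + 1 < T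
    · simpa [hc, hk, hk1] using hsorted k (k + 1) k.le_succ hk1
    · simpa [hc, hk, hk1] using hp (σ k) (hσlt k hk)
  have hlhs : singleItemRev b T p q = ∑ t ∈ range T, c (σ.symm t) * soldQty b q t := by
    refine sum_congr rfl fun t ht => ?_
    simp only [hc, if_pos (hσsymmlt t (mem_range.1 ht)), σ.apply_symm_apply, soldQty]
  have hrhs : singleItemRev b T (fun s => p (σ s)) (fun s => q (σ s)) =
      ∑ t ∈ range T, c (id t) * soldQty b (fun s => q (σ s)) t := by
    refine sum_congr rfl fun t ht => ?_
    simp only [hc, id, if_pos (mem_range.1 ht), soldQty]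
  rw [hlhs, hrhs, sum_comp_mul_eq_sum_sub_mul_sum_filter c _ (by simp [hc]) hσsymmlt,
    sum_comp_mul_eq_sum_sub_mul_sum_filter (π := id) c _ (by simp [hc]) fun t ht => ht]
  refine sum_le_sum fun k hk => mul_le_mul_of_nonneg_left ?_ (hdecr k (mem_range.1 hk))
  have hinit : (range T).filter (fun t => id t ≤ k) = range (k + 1) := by
    ext t; simp only [mem_filter, mem_range, id]; have := mem_range.1 hk; omega
  rw [hinit]
  exact sum_soldQty_filter_le_sum_range_soldQty_comp hb hq hσlt (mem_range.1 hk)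

section Integrability

variable {Ω : Type*} [MeasurableSpace Ω] {b : ℝ} {T : ℕ} {R : ℕ → Ω → ℝ}

lemma measurable_singleItemRev (P : ℕ → ℝ) (hR : ∀ s < T, Measurable (R s)) :
    Measurable fun ω => singleItemRev b T P fun s => R s ω := by
  have hS : ∀ n ≤ T, Measurable fun ω => ∑ s ∈ range n, R s ω := fun n hn =>
    measurable_sum _ fun s hs => hR s (by rw [mem_range] at hs; omega)
  refine measurable_sum _ fun t ht => measurable_const.mul ?_
  have ht := mem_range.1 ht
  exact (measurable_const.min (hS (t + 1) ht)).sub (measurable_const.min (hS t ht.le))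

lemma abs_singleItemRev_le (P r : ℕ → ℝ) (hr : ∀ s < T, r s ∈ Set.Icc (0 : ℝ) 1) :
    |singleItemRev b T P r| ≤ ∑ t ∈ range T, |P t| := by
  rw [singleItemRev_eq_sum_mul_soldQty]
  refine (abs_sum_le_sum_abs _ _).trans (sum_le_sum fun t ht => ?_)
  rw [abs_mul]
  exact mul_le_of_le_one_right (abs_nonneg _) (abs_soldQty_le_one (hr t (mem_range.1 ht)))

lemma integrable_singleItemRev (μ : Measure Ω) [IsFiniteMeasure μ] (P : ℕ → ℝ)
    (hR : ∀ s < T, Measurable (R s)) (hRrange : ∀ s < T, ∀ ω, R s ω ∈ Set.Icc (0 : ℝ) 1) :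
    Integrable (fun ω => singleItemRev b T P fun s => R s ω) μ :=
  .of_bound (measurable_singleItemRev P hR).aestronglyMeasurable _ <|
    .of_forall fun ω => abs_singleItemRev_le P _ fun s hs => hRrange s hs ω

end Integrability

theorem stmt_11_general {Ω : Type*} [MeasurableSpace Ω] (μ : Measure Ω) [IsProbabilityMeasure μ]
    (b : ℝ) (hb : 0 ≤ b) (T : ℕ)
    (Q : ℕ → Ω → ℝ)
    (hQmeas : ∀ s, s < T → Measurable (Q s))
    (hQrange : ∀ s, s < T → ∀ ω, Q s ω ∈ Set.Icc (0 : ℝ) 1)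
    (p : ℕ → ℝ) (hpnonneg : ∀ s, s < T → 0 ≤ p s)
    (σ : Equiv.Perm ℕ) (hσfix : ∀ s, T ≤ s → σ s = s)
    (hsorted : ∀ s s' : ℕ, s ≤ s' → s' < T → p (σ s') ≤ p (σ s)) :
    ∫ ω, singleItemRev b T p (fun s => Q s ω) ∂μ
      ≤ ∫ ω, singleItemRev b T (fun s => p (σ s)) (fun s => Q (σ s) ω) ∂μ := by
  have hσlt := σ.apply_lt_of_forall_le_apply_eq hσfix
  refine integral_mono (integrable_singleItemRev μ p hQmeas hQrange)
    (integrable_singleItemRev μ _ (fun s hs => hQmeas _ (hσlt s hs))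
      (fun s hs => hQrange _ (hσlt s hs))) fun ω => ?_
  exact singleItemRev_le_singleItemRev_comp_perm hb (fun s hs => (hQrange s hs ω).1) hpnonneg
    hσfix hsorted

/-- permuting the price–demand pairs by a permutation `σ` of the periods
`{0, …, T-1}` (fixing all other indices) so that the permuted prices are non-increasing over
time does not decrease the expected revenue. -/
theorem stmt_11 {Ω : Type*} [MeasurableSpace Ω] (μ : Measure Ω) [IsProbabilityMeasure μ]
    (b : ℝ) (hb : 0 ≤ b) (T : ℕ) (hT : 0 < T)
    (Q : ℕ → Ω → ℝ)
    (hQmeas : ∀ s, s < T → Measurable (Q s))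
    (hQindep : iIndepFun (fun s : Fin T => Q s) μ)
    (hQrange : ∀ s, s < T → ∀ ω, Q s ω ∈ Set.Icc (0 : ℝ) 1)
    (p : ℕ → ℝ) (hpnonneg : ∀ s, s < T → 0 ≤ p s)
    (σ : Equiv.Perm ℕ) (hσfix : ∀ s, T ≤ s → σ s = s)
    (hsorted : ∀ s s' : ℕ, s ≤ s' → s' < T → p (σ s') ≤ p (σ s)) :
    ∫ ω, singleItemRev b T p (fun s => Q s ω) ∂μ
      ≤ ∫ ω, singleItemRev b T (fun s => p (σ s)) (fun s => Q (σ s) ω) ∂μ :=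
  stmt_11_general μ b hb T Q hQmeas hQrange p hpnonneg σ hσfix hsorted
end
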